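/- Let k ∈ ℤ \ {0} and v ∈ C²((0,∞)). Define Q on ℝ² \ {0} by Q(x) = v(r) E₀, where r = |x|. Then at every x ∈ ℝ² \ {0}, 𝓛Q = (1/3)( v''(r) + v'(r)/r ) E₀ − (1/√3)( v''(r) − v'(r)/r ) ( E₁(φ) cos((k−2)φ) − E₂(φ) sin((k−2)φ) ), where φ is the polar angle of x. -/

import Mathlib

open Real Matrix MeasureTheory

noncomputable section

/-- Partial derivative in direction `i` of a scalar function on `ℝ²`. -/
def pd2 (i : Fin 2) (f : (Fin 2 → ℝ) → ℝ) (x : Fin 2 → ℝ) : ℝ :=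
  fderiv ℝ f x (Pi.single i 1)

/-- Partial derivative with index in `Fin 3`, with the convention `∂₃ ≡ 0`. -/
def pd (k : Fin 3) (f : (Fin 2 → ℝ) → ℝ) (x : Fin 2 → ℝ) : ℝ :=
  if h : (k : ℕ) < 2 then pd2 ⟨(k : ℕ), h⟩ f x else 0

/-- Componentwise two-dimensional Laplacian of a matrix-valued map. -/
def lap2 (Q : (Fin 2 → ℝ) → Matrix (Fin 3) (Fin 3) ℝ) (x : Fin 2 → ℝ) :
    Matrix (Fin 3) (Fin 3) ℝ :=
  Matrix.of fun i j => ∑ k : Fin 2, pd2 k (fun y => pd2 k (fun z => Q z i j) y) x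

/-- The operator `𝓛 Q_{ij} = ∂_j∂_k Q_{ik} + ∂_i∂_k Q_{jk} − (2/3)∂_l∂_k Q_{lk} δ_{ij}`. -/
def Lop (Q : (Fin 2 → ℝ) → Matrix (Fin 3) (Fin 3) ℝ) (x : Fin 2 → ℝ) :
    Matrix (Fin 3) (Fin 3) ℝ :=
  Matrix.of fun i j =>
    (∑ k, pd j (fun y => pd k (fun z => Q z i k) y) x)
    + (∑ k, pd i (fun y => pd k (fun z => Q z j k) y) x)
    - (2/3) * (∑ l, ∑ k, pd l (fun y => pd k (fun z => Q z l k) y) x)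
        * (if i = j then (1 : ℝ) else 0)

/-- The Euler–Lagrange equations (EL) at a point. -/
def EL (L M a2 b2 c2 : ℝ) (Q : (Fin 2 → ℝ) → Matrix (Fin 3) (Fin 3) ℝ)
    (x : Fin 2 → ℝ) : Prop :=
  L • lap2 Q x + M • Lop Q x =
    (-a2) • Q x
      - b2 • (Q x * Q x - ((Q x * Q x).trace / 3) • (1 : Matrix (Fin 3) (Fin 3) ℝ))
      + (c2 * (Q x * Q x).trace) • Q x

def nv (k : ℤ) (φ : ℝ) : Fin 3 → ℝ :=
  ![Real.cos ((k : ℝ) * φ / 2), Real.sin ((k : ℝ) * φ / 2), 0]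

def mv (k : ℤ) (φ : ℝ) : Fin 3 → ℝ :=
  ![-Real.sin ((k : ℝ) * φ / 2), Real.cos ((k : ℝ) * φ / 2), 0]

def e3 : Fin 3 → ℝ := ![0, 0, 1]

def E0 : Matrix (Fin 3) (Fin 3) ℝ :=
  Real.sqrt (3/2) • (vecMulVec e3 e3 - (1/3 : ℝ) • (1 : Matrix (Fin 3) (Fin 3) ℝ))

def E1 (k : ℤ) (φ : ℝ) : Matrix (Fin 3) (Fin 3) ℝ :=
  Real.sqrt 2 •
    (vecMulVec (nv k φ) (nv k φ)
      - (1/2 : ℝ) • ((1 : Matrix (Fin 3) (Fin 3) ℝ) - vecMulVec e3 e3))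

def E2 (k : ℤ) (φ : ℝ) : Matrix (Fin 3) (Fin 3) ℝ :=
  (Real.sqrt 2)⁻¹ • (vecMulVec (nv k φ) (mv k φ) + vecMulVec (mv k φ) (nv k φ))

def E3m (k : ℤ) (φ : ℝ) : Matrix (Fin 3) (Fin 3) ℝ :=
  (Real.sqrt 2)⁻¹ • (vecMulVec (nv k φ) e3 + vecMulVec e3 (nv k φ))

def E4m (k : ℤ) (φ : ℝ) : Matrix (Fin 3) (Fin 3) ℝ :=
  (Real.sqrt 2)⁻¹ • (vecMulVec (mv k φ) e3 + vecMulVec e3 (mv k φ))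

def sPlus (a2 b2 c2 : ℝ) : ℝ := (b2 + Real.sqrt (b2^2 + 24 * a2 * c2)) / (4 * c2)

/-- Rotation of `ℝ²` by angle `ψ`. -/
def rot2 (ψ : ℝ) (x : Fin 2 → ℝ) : Fin 2 → ℝ :=
  ![Real.cos ψ * x 0 - Real.sin ψ * x 1, Real.sin ψ * x 0 + Real.cos ψ * x 1]

/-- Rotation of `ℝ³` about `e₃` by angle `kψ/2`. -/
def Rk (k : ℤ) (ψ : ℝ) : Matrix (Fin 3) (Fin 3) ℝ :=
  Matrix.of
    ![![Real.cos ((k : ℝ) * ψ / 2), -Real.sin ((k : ℝ) * ψ / 2), 0],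
      ![Real.sin ((k : ℝ) * ψ / 2), Real.cos ((k : ℝ) * ψ / 2), 0],
      ![0, 0, 1]]

end

/-!
On the punctured plane `Q = v(|x|) E₀` with `E₀` constant, so `𝓛Q = E₀H + HE₀ − (2/3) tr(E₀H) I`
where `H` is the Hessian of `v(|x|)`. At `x = r(cos φ, sin φ)` this Hessian is
`v'' ω⊗ω + (v'/r)(I₂ − ω⊗ω)` with `ω = (cos φ, sin φ, 0)`, a matrix in the plane `e₃^⊥`, on which
`E₀` acts as multiplication by `−1/√6`; this gives the formula with `E₁` taken at `k = 2`. Finally,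
`E₁(φ)` and `E₂(φ)` are the reflection-type matrices of angle `kφ`, so rotating back by `(k − 2)φ`
turns `cos((k−2)φ) E₁ − sin((k−2)φ) E₂` into `E₁` at `k = 2`.
-/

open Filter Topology

section PartialDerivatives

variable {f g : (Fin 2 → ℝ) → ℝ} {x : Fin 2 → ℝ}

lemma pd2_const_mul (i : Fin 2) (c : ℝ) (f : (Fin 2 → ℝ) → ℝ) :
    pd2 i (fun z => c * f z) = fun x => c * pd2 i f x := by
  funext x
  rw [pd2, pd2, show (fun z => c * f z) = c • f from rfl, fderiv_const_smul_field]
  rfl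

lemma pd_const_mul (k : Fin 3) (c : ℝ) (f : (Fin 2 → ℝ) → ℝ) :
    pd k (fun z => c * f z) = fun x => c * pd k f x := by
  funext x
  unfold pd
  split
  · rw [pd2_const_mul]
  · simp

lemma pd2_add (i : Fin 2) (hf : DifferentiableAt ℝ f x) (hg : DifferentiableAt ℝ g x) :
    pd2 i (fun y => f y + g y) x = pd2 i f x + pd2 i g x := by
  simp [pd2, fderiv_fun_add hf hg]

lemma pd2_mul (i : Fin 2) (hf : DifferentiableAt ℝ f x) (hg : DifferentiableAt ℝ g x) :
    pd2 i (fun y => f y * g y) x = f x * pd2 i g x + g x * pd2 i f x := by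
  simp [pd2, fderiv_fun_mul hf hg]

lemma pd2_comp {u : ℝ → ℝ} (i : Fin 2) (hu : DifferentiableAt ℝ u (g x))
    (hg : DifferentiableAt ℝ g x) :
    pd2 i (fun y => u (g y)) x = deriv u (g x) * pd2 i g x := by
  have h : HasFDerivAt (fun y => u (g y)) (deriv u (g x) • fderiv ℝ g x) x :=
    hu.hasDerivAt.comp_hasFDerivAt x hg.hasFDerivAt
  rw [pd2, pd2, h.fderiv]
  rfl

lemma pd2_apply (i j : Fin 2) (x : Fin 2 → ℝ) :
    pd2 i (fun y => y j) x = if i = j then 1 else 0 := by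
  rw [pd2, (hasFDerivAt_apply j x).fderiv]
  simp [Pi.single_apply, eq_comm]

lemma pd_zero_eq_pd2 : pd 0 = pd2 0 := rfl

lemma pd_one_eq_pd2 : pd 1 = pd2 1 := rfl

lemma pd_two_eq_zero (f : (Fin 2 → ℝ) → ℝ) : pd 2 f = 0 := rfl

lemma pd_zero (k : Fin 3) : pd k (0 : (Fin 2 → ℝ) → ℝ) = 0 := by
  funext x
  unfold pd pd2
  split <;> simp

lemma Filter.EventuallyEq.pd2 (h : f =ᶠ[𝓝 x] g) (i : Fin 2) : pd2 i f =ᶠ[𝓝 x] pd2 i g := by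
  filter_upwards [h.fderiv (𝕜 := ℝ)] with y hy
  rw [_root_.pd2, _root_.pd2, hy]

lemma Filter.EventuallyEq.pd (h : f =ᶠ[𝓝 x] g) (k : Fin 3) : pd k f =ᶠ[𝓝 x] pd k g := by
  by_cases hk : (k : ℕ) < 2
  · filter_upwards [h.pd2 ⟨k, hk⟩] with y hy
    simp [_root_.pd, hk, hy]
  · exact .of_forall fun y => by simp [_root_.pd, hk]

end PartialDerivatives

section HessianAndLop

variable {x : Fin 2 → ℝ}

noncomputable def hess (f : (Fin 2 → ℝ) → ℝ) (x : Fin 2 → ℝ) : Matrix (Fin 3) (Fin 3) ℝ :=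
  of fun i j => pd i (pd j f) x

lemma Lop_congr {Q Q' : (Fin 2 → ℝ) → Matrix (Fin 3) (Fin 3) ℝ} (h : Q =ᶠ[𝓝 x] Q') :
    Lop Q x = Lop Q' x := by
  have hpp : ∀ a b j k : Fin 3, pd j (fun y => pd k (fun z => Q z a b) y) x =
      pd j (fun y => pd k (fun z => Q' z a b) y) x := fun a b j k =>
    (((h.fun_comp (· a b)).pd k).pd j).eq_of_nhds
  ext i j
  simp only [Lop, of_apply, hpp]

lemma Lop_smul_const (f : (Fin 2 → ℝ) → ℝ) (A : Matrix (Fin 3) (Fin 3) ℝ) (x : Fin 2 → ℝ) :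
    Lop (fun z => f z • A) x =
      A * (hess f x)ᵀ + hess f x * Aᵀ - ((2/3) * trace (A * (hess f x)ᵀ)) • 1 := by
  have hpp : ∀ a b j k : Fin 3,
      pd j (fun y => pd k (fun z => f z * A a b) y) x = A a b * hess f x j k := by
    intro a b j k
    simp only [mul_comm (f _), pd_const_mul]
    rfl
  ext i j
  simp only [Lop, of_apply, hpp, Matrix.add_apply, Matrix.sub_apply, Matrix.smul_apply, mul_apply,
    trace, diag, transpose_apply, one_apply, smul_eq_mul, mul_comm (hess f x i _)]

end HessianAndLop

section Radius

variable {x : Fin 2 → ℝ}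

noncomputable def radius (x : Fin 2 → ℝ) : ℝ := √(x 0 ^ 2 + x 1 ^ 2)

lemma sq_add_sq_pos (hx : x ≠ 0) : 0 < x 0 ^ 2 + x 1 ^ 2 := by
  have : x 0 ≠ 0 ∨ x 1 ≠ 0 := by
    by_contra! h
    exact hx (funext fun i => by fin_cases i <;> simp [h])
  rcases this with h | h <;> positivity

lemma radius_pos (hx : x ≠ 0) : 0 < radius x :=
  Real.sqrt_pos.2 (sq_add_sq_pos hx)

lemma radius_polar {r : ℝ} (hr : 0 ≤ r) (φ : ℝ) : radius ![r * cos φ, r * sin φ] = r := by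
  have hsq : (r * cos φ) ^ 2 + (r * sin φ) ^ 2 = r ^ 2 := by
    linear_combination r ^ 2 * sin_sq_add_cos_sq φ
  simp [radius, hsq, hr]

lemma polar_ne_zero {r : ℝ} (hr : 0 < r) (φ : ℝ) : ![r * cos φ, r * sin φ] ≠ 0 :=
  ne_of_apply_ne radius (by rw [radius_polar hr.le]; simp [radius, hr.ne'])

lemma exists_polar (x : Fin 2 → ℝ) : ∃ θ : ℝ, ![radius x * cos θ, radius x * sin θ] = x := by
  have hnorm : ‖(⟨x 0, x 1⟩ : ℂ)‖ = radius x := by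
    simp [Complex.norm_def, Complex.normSq_mk, radius, sq]
  refine ⟨Complex.arg ⟨x 0, x 1⟩, ?_⟩
  ext i
  fin_cases i
  · simpa [hnorm] using Complex.norm_mul_cos_arg ⟨x 0, x 1⟩
  · simpa [hnorm] using Complex.norm_mul_sin_arg ⟨x 0, x 1⟩

lemma eq_comp_radius_of_polar {α : Type*} {Q : (Fin 2 → ℝ) → α} {F : ℝ → α}
    (hQ : ∀ r > (0 : ℝ), ∀ φ : ℝ, Q ![r * cos φ, r * sin φ] = F r) (hx : x ≠ 0) :
    Q x = F (radius x) := by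
  obtain ⟨θ, hθ⟩ := exists_polar x
  rw [← hQ _ (radius_pos hx) θ, hθ]

lemma continuous_radius : Continuous radius := by
  unfold radius
  fun_prop

lemma differentiableAt_radius (hx : x ≠ 0) : DifferentiableAt ℝ radius x := by
  unfold radius
  exact DifferentiableAt.sqrt (by fun_prop) (sq_add_sq_pos hx).ne'

lemma pd2_sq_add_sq (i : Fin 2) (x : Fin 2 → ℝ) :
    pd2 i (fun y => y 0 ^ 2 + y 1 ^ 2) x = 2 * x i := by
  have hsq : ∀ j, pd2 i (fun y => y j ^ 2) x = 2 * x j * if i = j then 1 else 0 := fun j => by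
    rw [pd2_comp (u := (· ^ 2)) i (by fun_prop) (by fun_prop), pd2_apply]
    simp
  rw [pd2_add i (by fun_prop) (by fun_prop), hsq, hsq]
  fin_cases i <;> simp

lemma pd2_radius (i : Fin 2) (hx : x ≠ 0) : pd2 i radius x = x i / radius x := by
  have hpos := sq_add_sq_pos hx
  rw [show radius = fun y => √(y 0 ^ 2 + y 1 ^ 2) from rfl,
    pd2_comp i (Real.hasDerivAt_sqrt hpos.ne').differentiableAt (by fun_prop),
    (Real.hasDerivAt_sqrt hpos.ne').deriv, pd2_sq_add_sq]
  field_simp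

end Radius

section RadialFunctions

variable {v : ℝ → ℝ} {x : Fin 2 → ℝ}

lemma pd2_comp_radius (i : Fin 2) (hx : x ≠ 0) (hv : DifferentiableAt ℝ v (radius x)) :
    pd2 i (fun y => v (radius y)) x = deriv v (radius x) * (x i / radius x) := by
  rw [pd2_comp i hv (differentiableAt_radius hx), pd2_radius i hx]

lemma pd2_pd2_comp_radius (i j : Fin 2) (hx : x ≠ 0)
    (hv : ∀ᶠ t in 𝓝 (radius x), DifferentiableAt ℝ v t)
    (hv' : DifferentiableAt ℝ (deriv v) (radius x)) :
    pd2 i (pd2 j fun y => v (radius y)) x =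
      deriv (deriv v) (radius x) * (x i / radius x) * (x j / radius x)
        + deriv v (radius x) / radius x
          * ((if i = j then 1 else 0) - x i / radius x * (x j / radius x)) := by
  have hρ := radius_pos hx
  have hgrad : pd2 j (fun y => v (radius y)) =ᶠ[𝓝 x]
      fun y => deriv v (radius y) * (y j * (radius y)⁻¹) := by
    filter_upwards [isOpen_ne.mem_nhds hx, continuous_radius.continuousAt.eventually hv]
      with y hy hvy
    rw [pd2_comp_radius j hy hvy, div_eq_mul_inv]
  have hρd := differentiableAt_radius hx
  have hdv : DifferentiableAt ℝ (fun y => deriv v (radius y)) x := hv'.comp x hρd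
  have hinv : DifferentiableAt ℝ (fun y => (radius y)⁻¹) x := hρd.inv hρ.ne'
  have hj : DifferentiableAt ℝ (fun y : Fin 2 → ℝ => y j) x := differentiableAt_apply j x
  rw [(hgrad.pd2 i).eq_of_nhds, pd2_mul i hdv (hj.fun_mul hinv), pd2_mul i hj hinv,
    pd2_comp_radius i hx hv', pd2_comp_radius (v := Inv.inv) i hx (differentiableAt_inv hρ.ne'),
    pd2_apply]
  simp only [deriv_inv]
  field_simp
  split_ifs <;> ring

lemma nv_two (φ : ℝ) : nv 2 φ = ![cos φ, sin φ, 0] := by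
  simp [nv]

lemma hess_comp_radius_polar {r : ℝ} (hr : 0 < r) (φ : ℝ)
    (hv : ∀ᶠ t in 𝓝 r, DifferentiableAt ℝ v t) (hv' : DifferentiableAt ℝ (deriv v) r) :
    hess (fun y => v (radius y)) ![r * cos φ, r * sin φ] =
      deriv (deriv v) r • vecMulVec (nv 2 φ) (nv 2 φ)
        + (deriv v r / r) • (1 - vecMulVec e3 e3 - vecMulVec (nv 2 φ) (nv 2 φ)) := by
  have hρ := radius_polar hr.le φ
  rw [← hρ] at hv hv'
  have H := fun i j => pd2_pd2_comp_radius (v := v) i j (polar_ne_zero hr φ) hv hv'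
  rw [hρ] at H
  ext i j
  fin_cases i <;> fin_cases j <;>
    simp [hess, pd_zero_eq_pd2, pd_one_eq_pd2, pd_two_eq_zero, pd_zero, H, nv_two, e3,
      one_apply] <;>
    field_simp

end RadialFunctions

section Frame

lemma E1_eq (k : ℤ) (φ : ℝ) :
    E1 k φ = (√2)⁻¹ • !![cos (k * φ), sin (k * φ), 0; sin (k * φ), -cos (k * φ), 0; 0, 0, 0] := by
  have hθ : (k : ℝ) * φ = 2 * (k * φ / 2) := by ring
  have h2 : (√2)⁻¹ = √2 / 2 := by
    rw [inv_eq_iff_eq_inv, inv_div, div_sqrt]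
  rw [hθ, cos_two_mul, sin_two_mul, h2]
  ext i j
  fin_cases i <;> fin_cases j <;> simp [E1, nv, e3, one_apply, ← sq, sin_sq] <;> ring

lemma E2_eq (k : ℤ) (φ : ℝ) :
    E2 k φ = (√2)⁻¹ • !![-sin (k * φ), cos (k * φ), 0; cos (k * φ), sin (k * φ), 0; 0, 0, 0] := by
  have hθ : (k : ℝ) * φ = 2 * (k * φ / 2) := by ring
  rw [hθ, cos_two_mul, sin_two_mul]
  ext i j
  fin_cases i <;> fin_cases j <;> simp [E2, nv, mv] <;>
    linarith [sin_sq_add_cos_sq ((k : ℝ) * φ / 2)]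

lemma cos_smul_E1_sub_sin_smul_E2 (k : ℤ) (φ : ℝ) :
    cos (((k : ℝ) - 2) * φ) • E1 k φ - sin (((k : ℝ) - 2) * φ) • E2 k φ = E1 2 φ := by
  have h : ((2 : ℤ) : ℝ) * φ = k * φ - (k - 2) * φ := by push_cast; ring
  rw [E1_eq, E2_eq, E1_eq, h, cos_sub, sin_sub]
  ext i j
  fin_cases i <;> fin_cases j <;> simp <;> ring

lemma Lop_smul_E0 {f : (Fin 2 → ℝ) → ℝ} {x : Fin 2 → ℝ} {k : ℤ} {φ a b : ℝ}
    (h : hess f x = a • vecMulVec (nv k φ) (nv k φ)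
      + b • (1 - vecMulVec e3 e3 - vecMulVec (nv k φ) (nv k φ))) :
    Lop (fun z => f z • E0) x = ((1/3) * (a + b)) • E0 - ((√3)⁻¹ * (a - b)) • E1 k φ := by
  have h32 : √(3/2) = √3 / √2 := by rw [Real.sqrt_div' _ zero_le_two]
  have hs2 : √2 ^ 2 = 2 := Real.sq_sqrt zero_le_two
  have hs3 : √3 ^ 2 = 3 := Real.sq_sqrt zero_le_three
  have hcs := sin_sq_add_cos_sq ((k : ℝ) * φ / 2)
  rw [Lop_smul_const, h]
  ext i j
  fin_cases i <;> fin_cases j <;>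
    simp [E0, E1, nv, e3, trace, Fin.sum_univ_three, mul_apply, one_apply, h32] <;>
    field_simp <;> grind

end Frame

theorem Lop_of_E0_component_general
    (k : ℤ) (v : ℝ → ℝ)
    (hv : ContDiffOn ℝ 2 v (Set.Ioi 0))
    (Q : (Fin 2 → ℝ) → Matrix (Fin 3) (Fin 3) ℝ)
    (hQ : ∀ r > (0 : ℝ), ∀ φ : ℝ, Q ![r * Real.cos φ, r * Real.sin φ] = v r • E0) :
    ∀ r > (0 : ℝ), ∀ φ : ℝ,
      Lop Q ![r * Real.cos φ, r * Real.sin φ] =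
        ((1/3) * (deriv (deriv v) r + deriv v r / r)) • E0
        - ((Real.sqrt 3)⁻¹ * (deriv (deriv v) r - deriv v r / r)) •
            (Real.cos (((k : ℝ) - 2) * φ) • E1 k φ
              - Real.sin (((k : ℝ) - 2) * φ) • E2 k φ) := by
  intro r hr φ
  have hv' : ∀ᶠ t in 𝓝 r, DifferentiableAt ℝ v t := by
    filter_upwards [Ioi_mem_nhds hr] with t ht
    exact (hv.differentiableOn two_ne_zero).differentiableAt (Ioi_mem_nhds ht)
  have hv'' : DifferentiableAt ℝ (deriv v) r :=
    ((hv.deriv_of_isOpen isOpen_Ioi (by norm_num)).differentiableOn one_ne_zero).differentiableAt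
      (Ioi_mem_nhds hr)
  have hQ_radial : Q =ᶠ[𝓝 ![r * cos φ, r * sin φ]] fun y => v (radius y) • E0 := by
    filter_upwards [isOpen_ne.mem_nhds (polar_ne_zero hr φ)] with y hy
    exact eq_comp_radius_of_polar hQ hy
  rw [Lop_congr hQ_radial, Lop_smul_E0 (hess_comp_radius_polar hr φ hv' hv''),
    cos_smul_E1_sub_sin_smul_E2]

/-- `𝓛(v(r)E₀) = (1/3)(v'' + v'/r)E₀
− (1/√3)(v'' − v'/r)(E₁ cos((k−2)φ) − E₂ sin((k−2)φ))`. -/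
theorem Lop_of_E0_component
    (k : ℤ) (hk : k ≠ 0) (v : ℝ → ℝ)
    (hv : ContDiffOn ℝ 2 v (Set.Ioi 0))
    (Q : (Fin 2 → ℝ) → Matrix (Fin 3) (Fin 3) ℝ)
    (hQ : ∀ r > (0 : ℝ), ∀ φ : ℝ, Q ![r * Real.cos φ, r * Real.sin φ] = v r • E0) :
    ∀ r > (0 : ℝ), ∀ φ : ℝ,
      Lop Q ![r * Real.cos φ, r * Real.sin φ] =
        ((1/3) * (deriv (deriv v) r + deriv v r / r)) • E0
        - ((Real.sqrt 3)⁻¹ * (deriv (deriv v) r - deriv v r / r)) •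
            (Real.cos (((k : ℝ) - 2) * φ) • E1 k φ
              - Real.sin (((k : ℝ) - 2) * φ) • E2 k φ) :=
  Lop_of_E0_component_general k v hv Q hQ
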